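/- Let G be a graph whose edge set is partitioned into k+1 edge-disjoint complete bipartite graphs H_1, ..., H_{k+1}, where H_1 has parts A, B. Then the induced subgraph G[A] or the induced subgraph G[B] admits a partition of its edge set into at most ⌊k/2⌋ complete bipartite graphs. -/
import Mathlib


/-- The edge set of the complete bipartite graph with parts `A` and `B`. -/
def bicliqueEdges {V : Type*} (A B : Set V) : Set (Sym2 V) :=
  {e | ∃ a ∈ A, ∃ b ∈ B, e = s(a, b)}

/-- `G`'s edge set can be partitioned into at most `k` complete bipartite graphs. -/
def HasBicliquePartition {V : Type*} (G : SimpleGraph V) (k : ℕ) : Prop :=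
  ∃ A B : Fin k → Set V,
    (∀ i, Disjoint (A i) (B i)) ∧
    (Set.univ : Set (Fin k)).PairwiseDisjoint (fun i => bicliqueEdges (A i) (B i)) ∧
    (⋃ i, bicliqueEdges (A i) (B i)) = G.edgeSet

lemma bicliqueEdges_empty_left {V : Type*} (B : Set V) :
    bicliqueEdges (∅ : Set V) B = ∅ := by
  ext e; simp [bicliqueEdges]

/-- Auxiliary lemma: if `T` is the set of indices whose biclique contains an
edge inside `S`, and `T` has at most `k/2` elements, then `G[S]` admits a
biclique partition into at most `k/2` parts. -/
lemma aux_biclique {V : Type*} (G : SimpleGraph V) (k : ℕ)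
    (A B : Fin (k + 1) → Set V)
    (hdisj : ∀ i, Disjoint (A i) (B i))
    (hpair : (Set.univ : Set (Fin (k + 1))).PairwiseDisjoint
      (fun i => bicliqueEdges (A i) (B i)))
    (hcover : (⋃ i, bicliqueEdges (A i) (B i)) = G.edgeSet)
    (S : Set V)
    (T : Finset (Fin (k + 1)))
    (hT : ∀ i, i ∈ T ↔ ∃ x ∈ A i, ∃ y ∈ B i, x ∈ S ∧ y ∈ S)
    (hcard : T.card ≤ k / 2) :
    HasBicliquePartition (G.induce S) (k / 2) := by
  classical
  set c := T.card with hc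
  let e : Fin c ≃o {x // x ∈ T} := T.orderIsoOfFin rfl
  let idx : ∀ j : Fin (k / 2), (j : ℕ) < c → Fin (k + 1) :=
    fun j h => (e ⟨(j : ℕ), h⟩ : Fin (k + 1))
  refine ⟨fun j => if h : (j : ℕ) < c then {v : S | (v : V) ∈ A (idx j h)} else ∅,
          fun j => if h : (j : ℕ) < c then {v : S | (v : V) ∈ B (idx j h)} else ∅,
          ?_, ?_, ?_⟩
  · intro j
    by_cases h : (j : ℕ) < c
    · simp only [dif_pos h]
      rw [Set.disjoint_left]
      intro v hv hv'
      exact Set.disjoint_left.mp (hdisj (idx j h)) hv hv'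
    · simp only [dif_neg h]
      exact disjoint_bot_left
  · intro j1 _ j2 _ hne
    by_cases h1 : (j1 : ℕ) < c
    · by_cases h2 : (j2 : ℕ) < c
      · simp only [Function.onFun, dif_pos h1, dif_pos h2]
        have hii : idx j1 h1 ≠ idx j2 h2 := by
          intro hEq
          apply hne
          have : e ⟨(j1 : ℕ), h1⟩ = e ⟨(j2 : ℕ), h2⟩ := Subtype.ext hEq
          have := e.injective this
          have : (j1 : ℕ) = (j2 : ℕ) := congrArg (Fin.val : Fin c → ℕ) this
          exact Fin.ext this
        have key := hpair (Set.mem_univ (idx j1 h1)) (Set.mem_univ (idx j2 h2)) hii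
        rw [Set.disjoint_left]
        rintro ee ⟨a, ha, b, hb, rfl⟩ ⟨a', ha', b', hb', heq⟩
        have hmap : s((a : V), (b : V)) = s((a' : V), (b' : V)) := by
          have := congrArg (Sym2.map (Subtype.val : S → V)) heq
          simpa using this
        exact Set.disjoint_left.mp key
          ⟨(a : V), ha, (b : V), hb, rfl⟩
          ⟨(a' : V), ha', (b' : V), hb', hmap⟩
      · simp only [Function.onFun, dif_neg h2, bicliqueEdges_empty_left]
        exact disjoint_bot_right
    · simp only [Function.onFun, dif_neg h1, bicliqueEdges_empty_left]
      exact disjoint_bot_left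
  · ext ee
    induction ee using Sym2.ind with
    | _ a b =>
      simp only [Set.mem_iUnion]
      constructor
      · rintro ⟨j, hm⟩
        by_cases h : (j : ℕ) < c
        · rw [dif_pos h, dif_pos h] at hm
          obtain ⟨x, hx, y, hy, heq⟩ := hm
          have hadj : G.Adj (x : V) (y : V) := by
            rw [← G.mem_edgeSet, ← hcover]
            exact Set.mem_iUnion.mpr ⟨idx j h, ⟨(x : V), hx, (y : V), hy, rfl⟩⟩
          rw [heq]
          exact ((G.induce S).mem_edgeSet).mpr (SimpleGraph.comap_adj.mpr hadj)
        · rw [dif_neg h, dif_neg h, bicliqueEdges_empty_left] at hm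
          exact absurd hm (Set.notMem_empty _)
      · intro hm
        have hadj : G.Adj (a : V) (b : V) := SimpleGraph.comap_adj.mp
          (((G.induce S).mem_edgeSet).mp hm)
        have hmem : s((a : V), (b : V)) ∈ ⋃ i, bicliqueEdges (A i) (B i) := by
          rw [hcover]; exact G.mem_edgeSet.mpr hadj
        obtain ⟨i, x, hx, y, hy, heq⟩ := Set.mem_iUnion.mp hmem
        have hxy : ((a : V) = x ∧ (b : V) = y) ∨ ((a : V) = y ∧ (b : V) = x) := by
          rwa [Sym2.eq_iff] at heq
        have hiT : i ∈ T := by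
          refine (hT i).mpr ⟨x, hx, y, hy, ?_, ?_⟩
          · rcases hxy with ⟨h1, _⟩ | ⟨_, h2⟩
            · exact h1 ▸ a.2
            · exact h2 ▸ b.2
          · rcases hxy with ⟨_, h2⟩ | ⟨h1, _⟩
            · exact h2 ▸ b.2
            · exact h1 ▸ a.2
        set j0 : Fin c := e.symm ⟨i, hiT⟩ with hj0
        have hjlt : (j0 : ℕ) < k / 2 := lt_of_lt_of_le j0.isLt hcard
        refine ⟨⟨(j0 : ℕ), hjlt⟩, ?_⟩
        have h : ((⟨(j0 : ℕ), hjlt⟩ : Fin (k / 2)) : ℕ) < c := j0.isLt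
        rw [dif_pos h, dif_pos h]
        have hidx : idx ⟨(j0 : ℕ), hjlt⟩ h = i := by
          show (e ⟨(j0 : ℕ), _⟩ : Fin (k + 1)) = i
          have : (⟨(j0 : ℕ), j0.isLt⟩ : Fin c) = j0 := Fin.ext rfl
          rw [this, hj0, e.apply_symm_apply]
        rw [hidx]
        rcases hxy with ⟨h1, h2⟩ | ⟨h1, h2⟩
        · exact ⟨a, by simp [h1, hx], b, by simp [h2, hy], rfl⟩
        · exact ⟨b, by simp [h2, hx], a, by simp [h1, hy], Sym2.eq_swap⟩

/-- If `E(G)` is partitioned into `k+1` complete bipartite graphs, the first of which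
has parts `A 0`, `B 0`, then `G[A 0]` or `G[B 0]` admits a partition of its edge set
into at most `⌊k/2⌋` complete bipartite graphs. -/
theorem stmt_12 {V : Type*} [Fintype V] (G : SimpleGraph V) (k : ℕ)
    (A B : Fin (k + 1) → Set V)
    (hdisj : ∀ i, Disjoint (A i) (B i))
    (hpair : (Set.univ : Set (Fin (k + 1))).PairwiseDisjoint
      (fun i => bicliqueEdges (A i) (B i)))
    (hcover : (⋃ i, bicliqueEdges (A i) (B i)) = G.edgeSet) :
    HasBicliquePartition (G.induce (A 0)) (k / 2) ∨
      HasBicliquePartition (G.induce (B 0)) (k / 2) := by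
  classical
  set SA : Finset (Fin (k + 1)) :=
    Finset.univ.filter (fun i => ∃ x ∈ A i, ∃ y ∈ B i, x ∈ A 0 ∧ y ∈ A 0) with hSA
  set SB : Finset (Fin (k + 1)) :=
    Finset.univ.filter (fun i => ∃ x ∈ A i, ∃ y ∈ B i, x ∈ B 0 ∧ y ∈ B 0) with hSB
  have hTA : ∀ i, i ∈ SA ↔ ∃ x ∈ A i, ∃ y ∈ B i, x ∈ A 0 ∧ y ∈ A 0 := by
    intro i; simp [hSA]
  have hTB : ∀ i, i ∈ SB ↔ ∃ x ∈ A i, ∃ y ∈ B i, x ∈ B 0 ∧ y ∈ B 0 := by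
    intro i; simp [hSB]
  have h0A : (0 : Fin (k + 1)) ∉ SA := by
    intro h
    obtain ⟨x, hx, y, hy, _, hyA⟩ := (hTA 0).mp h
    exact Set.disjoint_left.mp (hdisj 0) hyA hy
  have h0B : (0 : Fin (k + 1)) ∉ SB := by
    intro h
    obtain ⟨x, hx, y, hy, hxB, _⟩ := (hTB 0).mp h
    exact Set.disjoint_left.mp (hdisj 0) hx hxB
  have hdisjAB : Disjoint SA SB := by
    rw [Finset.disjoint_left]
    intro i hiA hiB
    obtain ⟨x, hxAi, y, hyBi, hxA0, hyA0⟩ := (hTA i).mp hiA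
    obtain ⟨x', hx'Ai, y', hy'Bi, hx'B0, hy'B0⟩ := (hTB i).mp hiB
    have hne : (0 : Fin (k + 1)) ≠ i := fun h => h0A (h ▸ hiA)
    have key := hpair (Set.mem_univ (0 : Fin (k + 1))) (Set.mem_univ i) hne
    exact Set.disjoint_left.mp key
      ⟨x, hxA0, y', hy'B0, rfl⟩ ⟨x, hxAi, y', hy'Bi, rfl⟩
  have hcards : SA.card + SB.card ≤ k := by
    have h1 : SA.card + SB.card = (SA ∪ SB).card :=
      (Finset.card_union_of_disjoint hdisjAB).symm
    have h2 : SA ∪ SB ⊆ Finset.univ.erase 0 := by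
      intro i hi
      refine Finset.mem_erase.mpr ⟨?_, Finset.mem_univ i⟩
      rintro rfl
      rcases Finset.mem_union.mp hi with h | h
      · exact h0A h
      · exact h0B h
    have h3 : (Finset.univ.erase (0 : Fin (k + 1))).card = k := by
      rw [Finset.card_erase_of_mem (Finset.mem_univ 0), Finset.card_univ,
        Fintype.card_fin]
      omega
    calc SA.card + SB.card = (SA ∪ SB).card := h1
      _ ≤ (Finset.univ.erase (0 : Fin (k + 1))).card := Finset.card_le_card h2
      _ = k := h3
  rcases (show SA.card ≤ k / 2 ∨ SB.card ≤ k / 2 by omega) with hle | hle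
  · exact Or.inl (aux_biclique G k A B hdisj hpair hcover (A 0) SA hTA hle)
  · exact Or.inr (aux_biclique G k A B hdisj hpair hcover (B 0) SB hTB hle)
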